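/- arXiv:1210.7502 — 2 statements merged into one kernel-verified Lean document; each statement's English description precedes it below -/
import Mathlib

section
/- For any φ = (v, w) ∈ H¹(ℝ, ℝ²), the operator Δ_ε defined by (Δ_ε φ)₁(x) = (1/h²)[d_e(w(x) − 2v(x) + w(x−h)) + ε d₂(v(x+h) − 2v(x) + v(x−h))] and (Δ_ε φ)₂(x) = (1/h²)[d_o(v(x+h) − 2w(x) + v(x)) + ε d₂(w(x+h) − 2w(x) + w(x−h))] satisfies ⟨Δ_ε φ, φ'⟩_{L²} = 0, provided d_e = d_o. -/
/-!
Writing `k = 1 / h²` and `d = d_e = d_o`, the integrand is `k d` times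
`P(w,v,0) + P(w,v,h) - P(v,v,0) - P(w,w,0)` plus `k ε d₂` times
`P(v,v,h) + P(w,w,h) - P(v,v,0) - P(w,w,0)`, where
`P(f,g,c)(x) = f(x - c) g'(x) + g(x + c) f'(x)`. Translating the first summand by `c` turns
`∫ P(f,g,c)` into `∫ (f · g(· + c))'`, which vanishes for `f, g ∈ H¹(ℝ)`.
-/

open MeasureTheory

namespace MeasureTheory

variable {α E : Type*} [MeasurableSpace α] [NormedAddCommGroup E] [NormedSpace ℝ E]

def integralKer (μ : Measure α) : Submodule ℝ (α → E) where
  carrier := {F | Integrable F μ ∧ ∫ x, F x ∂μ = 0}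
  zero_mem' := ⟨integrable_zero _ _ _, integral_zero _ _⟩
  add_mem' := fun ⟨hF, hF₀⟩ ⟨hG, hG₀⟩ =>
    ⟨hF.add hG, by simp only [Pi.add_apply, integral_add hF hG, hF₀, hG₀, add_zero]⟩
  smul_mem' := fun c _ ⟨hF, hF₀⟩ =>
    ⟨hF.smul c, by simp only [Pi.smul_apply, integral_smul, hF₀, smul_zero]⟩

theorem MemLp.integrable_mul_two {𝕜 : Type*} [NormedRing 𝕜] {μ : Measure α} {f g : α → 𝕜}
    (hf : MemLp f 2 μ) (hg : MemLp g 2 μ) : Integrable (fun x => f x * g x) μ :=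
  hf.integrable_mul hg

end MeasureTheory

section CrossTerm

variable {f g f' g' : ℝ → ℝ}
  (hf : ∀ x, HasDerivAt f (f' x) x) (hg : ∀ x, HasDerivAt g (g' x) x)
  (hf2 : MemLp f 2 volume) (hg2 : MemLp g 2 volume)
  (hf'2 : MemLp f' 2 volume) (hg'2 : MemLp g' 2 volume)

include hf hg hf2 hg2 hf'2 hg'2 in
theorem shift_mul_deriv_add_mem_integralKer (c : ℝ) :
    (fun x => f (x - c) * g' x + g (x + c) * f' x) ∈ integralKer volume := by
  have hf2c : MemLp (fun x => f (x - c)) 2 volume :=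
    hf2.comp_measurePreserving (measurePreserving_sub_right volume c)
  have hg2c : MemLp (fun x => g (x + c)) 2 volume :=
    hg2.comp_measurePreserving (measurePreserving_add_right volume c)
  have hg'2c : MemLp (fun x => g' (x + c)) 2 volume :=
    hg'2.comp_measurePreserving (measurePreserving_add_right volume c)
  refine ⟨(hf2c.integrable_mul_two hg'2).add (hg2c.integrable_mul_two hf'2), ?_⟩
  have htranslate : ∫ x, f (x - c) * g' x = ∫ x, f x * g' (x + c) := by
    simpa using (integral_add_right_eq_self (fun x => f (x - c) * g' x) c).symm
  have hprod : ∫ x, (f' x * g (x + c) + f x * g' (x + c)) = 0 :=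
    integral_eq_zero_of_hasDerivAt_of_integrable
      (fun x => (hf x).mul ((hg (x + c)).comp_add_const x c))
      ((hf'2.integrable_mul_two hg2c).add (hf2.integrable_mul_two hg'2c))
      (hf2.integrable_mul_two hg2c)
  rw [integral_add (hf'2.integrable_mul_two hg2c) (hf2.integrable_mul_two hg'2c)] at hprod
  rw [integral_add (hf2c.integrable_mul_two hg'2) (hg2c.integrable_mul_two hf'2), htranslate]
  simp only [mul_comm (g _)]
  linarith

end CrossTerm

theorem stmt_3_general (h ε d₂ de do_ : ℝ) (hdedo : de = do_)
    (v w v' w' : ℝ → ℝ)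
    (hv : ∀ x, HasDerivAt v (v' x) x) (hw : ∀ x, HasDerivAt w (w' x) x)
    (hv2 : MemLp v 2 (volume : Measure ℝ)) (hw2 : MemLp w 2 (volume : Measure ℝ))
    (hv'2 : MemLp v' 2 (volume : Measure ℝ)) (hw'2 : MemLp w' 2 (volume : Measure ℝ)) :
    ∫ x : ℝ,
      ((1 / h ^ 2) * (de * (w x - 2 * v x + w (x - h))
          + ε * d₂ * (v (x + h) - 2 * v x + v (x - h))) * v' x
      + (1 / h ^ 2) * (do_ * (v (x + h) - 2 * w x + v x)
          + ε * d₂ * (w (x + h) - 2 * w x + w (x - h))) * w' x) = 0 := by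
  subst hdedo
  have hwv := shift_mul_deriv_add_mem_integralKer hw hv hw2 hv2 hw'2 hv'2
  have hvv := shift_mul_deriv_add_mem_integralKer hv hv hv2 hv2 hv'2 hv'2
  have hww := shift_mul_deriv_add_mem_integralKer hw hw hw2 hw2 hw'2 hw'2
  have hcoupling := sub_mem (sub_mem (add_mem (hwv 0) (hwv h)) (hvv 0)) (hww 0)
  have hdiffusion := sub_mem (sub_mem (add_mem (hvv h) (hww h)) (hvv 0)) (hww 0)
  have hmem := add_mem (Submodule.smul_mem _ (de / h ^ 2) hcoupling)
    (Submodule.smul_mem _ (ε * d₂ / h ^ 2) hdiffusion)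
  refine (integral_congr_ae (ae_of_all _ fun x => ?_)).trans hmem.2
  simp only [Pi.add_apply, Pi.sub_apply, Pi.smul_apply, smul_eq_mul, sub_zero, add_zero]
  ring

/-- Lemma 4.1: for `φ = (v,w) ∈ H¹(ℝ,ℝ²)` the operator `Δ_ε` satisfies
`⟨Δ_ε φ, φ'⟩_{L²} = 0`, provided `d_e = d_o`. -/
theorem stmt_3 (h ε d₂ de do_ : ℝ) (hh : 0 < h) (hdedo : de = do_)
    (v w v' w' : ℝ → ℝ)
    (hv : ∀ x, HasDerivAt v (v' x) x) (hw : ∀ x, HasDerivAt w (w' x) x)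
    (hv2 : MemLp v 2 (volume : Measure ℝ)) (hw2 : MemLp w 2 (volume : Measure ℝ))
    (hv'2 : MemLp v' 2 (volume : Measure ℝ)) (hw'2 : MemLp w' 2 (volume : Measure ℝ)) :
    ∫ x : ℝ,
      ((1 / h ^ 2) * (de * (w x - 2 * v x + w (x - h))
          + ε * d₂ * (v (x + h) - 2 * v x + v (x - h))) * v' x
      + (1 / h ^ 2) * (do_ * (v (x + h) - 2 * w x + v x)
          + ε * d₂ * (w (x + h) - 2 * w x + w (x - h))) * w' x) = 0 :=
  stmt_3_general h ε d₂ de do_ hdedo v w v' w' hv hw hv2 hw2 hv'2 hw'2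
end

section
/- Let d₁ < 0, d_e, d_o > 0 with d_e d_o = d₁², ε ≥ 0, d₂ ∈ ℝ, and γ₁, γ₂ ∈ ℝ. Define for θ ∈ ℝ the complex number Υ(iθ) = −θ² − i[4εd₂(cos θ − 1) − 2d_e − γ₁ − 2d_o − γ₂]θ + [2εd₂(cos θ − 1) − 2d_e − γ₁][2εd₂(cos θ − 1) − 2d_o − γ₂] − 2d_e d_o(1 + cos θ). Then for every θ ≠ 0, Υ(iθ) ≠ 0. -/
open Complex

/-- Lemma 4.2 (hyperbolicity off zero frequency): with `d₁ < 0`, `d_e, d_o > 0`,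
`d_e d_o = d₁²`, `ε ≥ 0`, the characteristic function `Υ(iθ)` does not vanish
for `θ ≠ 0`. -/
theorem stmt_5 (d₁ de do_ ε d₂ γ₁ γ₂ : ℝ)
    (hd₁ : d₁ < 0) (hde : 0 < de) (hdo : 0 < do_) (hprod : de * do_ = d₁ ^ 2)
    (hε : 0 ≤ ε) :
    ∀ θ : ℝ, θ ≠ 0 →
      (-(θ : ℂ) ^ 2
        - Complex.I * ((4 * ε * d₂ * (Real.cos θ - 1) - 2 * de - γ₁ - 2 * do_ - γ₂ : ℝ) : ℂ)
            * (θ : ℂ)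
        + ((2 * ε * d₂ * (Real.cos θ - 1) - 2 * de - γ₁ : ℝ) : ℂ)
            * ((2 * ε * d₂ * (Real.cos θ - 1) - 2 * do_ - γ₂ : ℝ) : ℂ)
        - ((2 * de * do_ * (1 + Real.cos θ) : ℝ) : ℂ)) ≠ 0 := by
  intro θ hθ h
  set a := 2 * ε * d₂ * (Real.cos θ - 1) - 2 * de - γ₁ with ha
  set b := 2 * ε * d₂ * (Real.cos θ - 1) - 2 * do_ - γ₂ with hb
  have hre := congrArg Complex.re h
  have him := congrArg Complex.im h
  have hab : (4 * ε * d₂ * (Real.cos θ - 1) - 2 * de - γ₁ - 2 * do_ - γ₂) = a + b := by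
    rw [ha, hb]; ring
  rw [hab] at hre him
  simp only [Complex.add_re, Complex.sub_re, Complex.neg_re, Complex.mul_re, Complex.mul_im,
    Complex.add_im, Complex.sub_im, Complex.neg_im, Complex.I_re, Complex.I_im, Complex.ofReal_re,
    Complex.ofReal_im, Complex.zero_re, Complex.zero_im, pow_two] at hre him
  have hsum : a + b = 0 := by
    rcases mul_eq_zero.mp (by linarith [him] : (a + b) * θ = 0) with h' | h'
    · exact h'
    · exact absurd h' hθ
  have hcos : Real.cos θ ≥ -1 := Real.neg_one_le_cos θ
  have hθ2 : 0 < θ * θ := mul_self_pos.mpr hθ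
  have hab2 : a * b = -(a * a) := by
    have hb' : b = -a := by linarith
    rw [hb']; ring
  nlinarith [hab2, sq_nonneg a, mul_self_nonneg a,
    mul_nonneg (mul_nonneg (mul_nonneg (by norm_num : (0:ℝ) ≤ 2) hde.le) hdo.le)
      (by linarith : (0:ℝ) ≤ 1 + Real.cos θ)]
end
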